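/- A divisor P on the triangulated product Δ lies in the image of β if and only if P is Cartier and P(e) = 0 for every diagonal edge e of Δ. -/

import Mathlib

open scoped Classical
open Finset

section TriangulatedProduct

variable {VG VH : Type*}

/-- The column of the Laplacian matrix of `G` indexed by the vertex `w`:
its entry at `v` is `-deg v` if `v = w`, `1` if `v` is adjacent to `w`, and `0` otherwise. -/
noncomputable def lapCol (G : SimpleGraph VG) [Fintype VG] (w v : VG) : ℤ :=
  if v = w then -(((Finset.univ.filter (fun u => G.Adj v u)).card : ℤ))
  else if G.Adj v w then 1 else 0

/-- A divisor on a finite graph is principal if it lies in the ℤ-span of the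
columns of the Laplacian matrix of the graph. -/
def GraphPrincipal (G : SimpleGraph VG) [Fintype VG] (D : VG → ℤ) : Prop :=
  ∃ f : VG → ℤ, ∀ v, D v = ∑ w, f w * lapCol G w v

/-- A triangulated product of the graphs `G` and `H`: for each square
(an edge `aa'` of `G` together with an edge `bb'` of `H`) exactly one of the two
possible diagonals `{(a,b),(a',b')}`, `{(a,b'),(a',b)}` is chosen.  The structure
records the resulting symmetric "diagonal edge" relation. -/
structure TriProd (G : SimpleGraph VG) (H : SimpleGraph VH) where
  diag : VG × VH → VG × VH → Prop
  diag_symm : ∀ u v, diag u v → diag v u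
  diag_adj : ∀ a a' b b', diag (a, b) (a', b') → G.Adj a a' ∧ H.Adj b b'
  diag_choice : ∀ a a' b b', G.Adj a a' → H.Adj b b' →
    (diag (a, b) (a', b') ∧ ¬ diag (a, b') (a', b)) ∨
    (¬ diag (a, b) (a', b') ∧ diag (a, b') (a', b))

namespace TriProd

variable {G : SimpleGraph VG} {H : SimpleGraph VH}

/-- `u` and `v` form an edge of the triangulated product: a horizontal edge,
a vertical edge, or a diagonal edge. -/
def Adj (T : TriProd G H) (u v : VG × VH) : Prop :=
  (u.2 = v.2 ∧ G.Adj u.1 v.1) ∨ (u.1 = v.1 ∧ H.Adj u.2 v.2) ∨ T.diag u v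

/-- `{u, v, w}` is a triangle (2-face) of the triangulated product. -/
def IsFace (T : TriProd G H) (u v w : VG × VH) : Prop :=
  ∃ a a' b b', T.diag (a, b) (a', b') ∧
    ({u, v, w} : Finset (VG × VH)) = {(a, b), (a', b'), (a', b)}

/-- `{u, v, w}` is a triangle of the triangulated product whose diagonal edge
does not contain the vertex `x`. -/
def IsFaceAvoiding (T : TriProd G H) (u v w x : VG × VH) : Prop :=
  ∃ a a' b b', T.diag (a, b) (a', b') ∧
    ({u, v, w} : Finset (VG × VH)) = {(a, b), (a', b'), (a', b)} ∧
    x ≠ (a, b) ∧ x ≠ (a', b')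

variable [Fintype VG] [Fintype VH]

/-- The structure constant `α(e, x)` for the edge `e = {u, v}` of the
triangulated product and the vertex `x`. -/
noncomputable def alpha (T : TriProd G H) (u v x : VG × VH) : ℤ :=
  if x = u ∨ x = v then
    (if T.diag u v then 1
     else ((Finset.univ.filter (fun w => T.IsFaceAvoiding u v w x)).card : ℤ))
  else 0

/-- The divisor of the function `φ`, evaluated at the edge `{u, v}` of the
triangulated product: the sum of `φ` over the third vertices of the triangles
containing `{u, v}`, minus `α({u,v},u) φ(u) + α({u,v},v) φ(v)`. -/
noncomputable def Div (T : TriProd G H) (φ : VG × VH → ℤ) (u v : VG × VH) : ℤ :=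
  (∑ w ∈ Finset.univ.filter (fun w => T.IsFace u v w), φ w)
    - (T.alpha u v u * φ u + T.alpha u v v * φ v)

/-- A divisor on the triangulated product (a function on edges, encoded as a
function on ordered pairs of vertices) is principal if it agrees with `Div φ`
on every edge, for some `φ`. -/
def Principal (T : TriProd G H) (D : VG × VH → VG × VH → ℤ) : Prop :=
  ∃ φ : VG × VH → ℤ, ∀ u v, T.Adj u v → D u v = T.Div φ u v

/-- A divisor on the triangulated product is Cartier if near every vertex `x`
it agrees with a principal divisor on all edges containing `x`. -/
def Cartier (T : TriProd G H) (D : VG × VH → VG × VH → ℤ) : Prop :=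
  ∀ x : VG × VH, ∃ φ : VG × VH → ℤ,
    ∀ u v, T.Adj u v → (x = u ∨ x = v) → D u v = T.Div φ u v

/-- A divisor is ℚ-Cartier if some nonzero integer multiple of it is Cartier. -/
def QCartier (T : TriProd G H) (D : VG × VH → VG × VH → ℤ) : Prop :=
  ∃ m : ℤ, m ≠ 0 ∧ T.Cartier (fun u v => m * D u v)

/-- The balancing conditions for a divisor `D` on the triangulated product. -/
def Balanced (T : TriProd G H) (D : VG × VH → VG × VH → ℤ) : Prop :=
  ∀ a : VG, ∀ b : VH,
    (∀ x x' : VG, G.Adj a x → G.Adj a x' →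
      (∑ c ∈ Finset.univ.filter (fun c : VH => T.Adj (a, b) (x, c)), D (a, b) (x, c)) =
      (∑ c ∈ Finset.univ.filter (fun c : VH => T.Adj (a, b) (x', c)), D (a, b) (x', c))) ∧
    (∀ y y' : VH, H.Adj b y → H.Adj b y' →
      (∑ c ∈ Finset.univ.filter (fun c : VG => T.Adj (a, b) (c, y)), D (a, b) (c, y)) =
      (∑ c ∈ Finset.univ.filter (fun c : VG => T.Adj (a, b) (c, y')), D (a, b) (c, y')))

end TriProd

/-- The map `β` sending a pair of divisors on `G` and `H` to a divisor on the
triangulated product: `C(a)` on vertical edges `{(a,b),(a,b')}`, `D(b)` on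
horizontal edges `{(a,b),(a',b)}`, and `0` on diagonal edges. -/
noncomputable def beta (C : VG → ℤ) (D : VH → ℤ) (u v : VG × VH) : ℤ :=
  if u.1 = v.1 then C u.1 else if u.2 = v.2 then D u.2 else 0

end TriangulatedProduct

/-!
A function of the form `φ (a, b) = f a + g b` has divisor `∑_{a' ~ a} (f a' - f a)` on the
vertical edges at `(a, b)`, the analogous sum on the horizontal ones, and `0` on the diagonals.
Taking `f` and `g` supported at a single neighbour gives local equations for `β(C, D)`, which is
therefore Cartier.

Conversely, let `P` be Cartier, vanishing on diagonals, with local equation `φ` at `(a, b)`.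
Vanishing on the diagonal through `(a, b)` of each square says
`φ (a', b') - φ (a, b') = φ (a', b) - φ (a, b)`, so `P` takes the same value
`∑_{a' ~ a} (φ (a', b) - φ (a, b))` on every vertical edge at `(a, b)`. Since `P` is symmetric
and `H` is connected, `P` is then constant on all vertical edges over `a`, which defines `C a`.
Horizontal edges are the vertical edges of the transposed product of `H` and `G`.
-/

lemma SimpleGraph.Preconnected.exists_adj {V : Type*} {G : SimpleGraph V} (hG : G.Preconnected)
    {a₀ a₁ : V} (h : G.Adj a₀ a₁) (a : V) : ∃ a', G.Adj a a' :=
  have : Nontrivial V := ⟨⟨a₀, a₁, h.ne⟩⟩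
  hG.exists_adj_of_nontrivial a

lemma SimpleGraph.Preconnected.eq_of_adj_of_adj {V α : Type*} {G : SimpleGraph V} (hG : G.Preconnected)
    {W : V → V → α} (hsymm : ∀ u v, G.Adj u v → W u v = W v u)
    (hloc : ∀ u v w, G.Adj u v → G.Adj u w → W u v = W u w)
    {u v x y : V} (huv : G.Adj u v) (hxy : G.Adj x y) : W u v = W x y := by
  obtain ⟨p⟩ := hG u x
  induction p generalizing v with
  | nil => exact hloc _ _ _ huv hxy
  | cons h _ ih => exact (hloc _ _ _ huv h).trans ((hsymm _ _ h).trans (ih h.symm hxy))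

lemma SimpleGraph.sum_adj_sub_pi_single {V : Type*} [Fintype V] {G : SimpleGraph V} {a a₁ : V}
    (h : G.Adj a a₁) (c : ℤ) :
    ∑ x ∈ univ.filter (fun x => G.Adj a x),
      ((Pi.single a₁ c : V → ℤ) x - (Pi.single a₁ c : V → ℤ) a) = c := by
  simp [Pi.single_eq_of_ne h.ne, sum_pi_single', h]

lemma Finset.swap_triangle_eq_iff {α β : Type*} [DecidableEq α] [DecidableEq β]
    {u v w : β × α} {a a' : α} {b b' : β} :
    ({u.swap, v.swap, w.swap} : Finset (α × β)) = {(a', b'), (a, b), (a, b')} ↔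
      ({u, v, w} : Finset (β × α)) = {(b, a), (b', a'), (b', a)} := by
  rw [← (Finset.image_injective Prod.swap_injective).eq_iff]
  simp only [Finset.image_insert, Finset.image_singleton, Prod.swap_swap, Prod.swap_prod_mk]
  rw [Finset.insert_comm (b', a') (b, a)]

namespace TriProd

variable {VG VH : Type*} {G : SimpleGraph VG} {H : SimpleGraph VH} (T : TriProd G H)

lemma diag_ne {u v : VG × VH} (h : T.diag u v) : u.1 ≠ v.1 ∧ u.2 ≠ v.2 :=
  ⟨(T.diag_adj u.1 v.1 u.2 v.2 h).1.ne, (T.diag_adj u.1 v.1 u.2 v.2 h).2.ne⟩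

lemma not_diag_same_fst (a : VG) (b b' : VH) : ¬ T.diag (a, b) (a, b') :=
  fun hd => (T.diag_ne hd).1 rfl

lemma not_diag_same_snd (a a' : VG) (b : VH) : ¬ T.diag (a, b) (a', b) :=
  fun hd => (T.diag_ne hd).2 rfl

lemma beta_eq_zero_of_diag (C : VG → ℤ) (D : VH → ℤ) {u v : VG × VH} (hd : T.diag u v) :
    beta C D u v = 0 := by
  rw [beta, if_neg (T.diag_ne hd).1, if_neg (T.diag_ne hd).2]

lemma diag_iff_not_diag {a a' : VG} {b b' : VH} (ha : G.Adj a a') (hb : H.Adj b b') :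
    T.diag (a, b') (a', b) ↔ ¬ T.diag (a, b) (a', b') := by
  rcases T.diag_choice a a' b b' ha hb with h | h <;> tauto

lemma isFace_comm {u v w : VG × VH} : T.IsFace u v w ↔ T.IsFace v u w := by
  simp only [IsFace, Finset.insert_comm u v]

lemma isFaceAvoiding_comm {u v w x : VG × VH} :
    T.IsFaceAvoiding u v w x ↔ T.IsFaceAvoiding v u w x := by
  simp only [IsFaceAvoiding, Finset.insert_comm u v]

lemma isFaceAvoiding_self_iff {u v w : VG × VH} :
    T.IsFaceAvoiding u v w u ↔ T.IsFace u v w ∧ ¬ T.diag u v ∧ ¬ T.diag u w := by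
  constructor
  · rintro ⟨a, a', b, b', hd, hset, hx, hx'⟩
    refine ⟨⟨a, a', b, b', hd, hset⟩, ?_⟩
    simp only [Finset.Subset.antisymm_iff, Finset.insert_subset_iff, Finset.singleton_subset_iff,
      Finset.mem_insert, Finset.mem_singleton] at hset
    grind [diag_ne]
  · rintro ⟨⟨a, a', b, b', hd, hset⟩, huv, huw⟩
    refine ⟨a, a', b, b', hd, hset, ?_⟩
    have := T.diag_symm
    simp only [Finset.Subset.antisymm_iff, Finset.insert_subset_iff, Finset.singleton_subset_iff,
      Finset.mem_insert, Finset.mem_singleton] at hset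
    grind

lemma isFace_vert_iff {a : VG} {b b' : VH} (hb : H.Adj b b') (w : VG × VH) :
    T.IsFace (a, b) (a, b') w ↔
      ∃ a', G.Adj a a' ∧ w = if T.diag (a, b) (a', b') then (a', b') else (a', b) := by
  constructor
  · rintro ⟨A, A', B, B', hd, hset⟩
    obtain ⟨hA, hB⟩ := T.diag_adj _ _ _ _ hd
    have := T.diag_iff_not_diag hA hB
    have := T.diag_symm
    simp only [Finset.Subset.antisymm_iff, Finset.insert_subset_iff, Finset.singleton_subset_iff,
      Finset.mem_insert, Finset.mem_singleton] at hset
    exact ⟨w.1, by grind [SimpleGraph.Adj.symm, SimpleGraph.Adj.ne]⟩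
  · rintro ⟨a', ha, rfl⟩
    split_ifs with hd
    · refine ⟨a', a, b', b, T.diag_symm _ _ hd, ?_⟩
      ext; simp only [Finset.mem_insert, Finset.mem_singleton]; tauto
    · refine ⟨a', a, b, b', T.diag_symm _ _ ((T.diag_iff_not_diag ha hb).2 hd), ?_⟩
      ext; simp only [Finset.mem_insert, Finset.mem_singleton]; tauto

lemma isFace_diag_iff {a a' : VG} {b b' : VH} (hd : T.diag (a, b) (a', b')) (w : VG × VH) :
    T.IsFace (a, b) (a', b') w ↔ w = (a', b) ∨ w = (a, b') := by
  constructor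
  · rintro ⟨A, A', B, B', hd', hset⟩
    have := T.diag_ne hd
    have := T.diag_ne hd'
    simp only [Finset.Subset.antisymm_iff, Finset.insert_subset_iff, Finset.singleton_subset_iff,
      Finset.mem_insert, Finset.mem_singleton] at hset
    grind
  · rintro (rfl | rfl)
    · exact ⟨a, a', b, b', hd, rfl⟩
    · exact ⟨a', a, b', b, T.diag_symm _ _ hd, by rw [Finset.insert_comm]⟩

def swap : TriProd H G where
  diag u v := T.diag u.swap v.swap
  diag_symm u v := T.diag_symm u.swap v.swap
  diag_adj b b' a a' h := (T.diag_adj a a' b b' h).symm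
  diag_choice b b' a a' hb ha := by
    have := T.diag_iff_not_diag ha hb
    have := T.diag_symm (a', b) (a, b')
    have := T.diag_symm (a, b') (a', b)
    simp only [Prod.swap_prod_mk]
    tauto

@[simp] lemma swap_diag (u v : VH × VG) : T.swap.diag u v ↔ T.diag u.swap v.swap := Iff.rfl

lemma swap_adj (u v : VH × VG) : T.swap.Adj u v ↔ T.Adj u.swap v.swap := by
  simp only [Adj, swap_diag, Prod.fst_swap, Prod.snd_swap]
  exact or_left_comm

lemma swap_isFace (u v w : VH × VG) : T.swap.IsFace u v w ↔ T.IsFace u.swap v.swap w.swap := by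
  constructor
  · rintro ⟨b, b', a, a', hd, hset⟩
    exact ⟨a', a, b', b, T.diag_symm _ _ hd, Finset.swap_triangle_eq_iff.2 hset⟩
  · rintro ⟨a', a, b', b, hd, hset⟩
    exact ⟨b, b', a, a', T.diag_symm _ _ hd, Finset.swap_triangle_eq_iff.1 hset⟩

lemma swap_isFaceAvoiding (u v w x : VH × VG) :
    T.swap.IsFaceAvoiding u v w x ↔ T.IsFaceAvoiding u.swap v.swap w.swap x.swap := by
  constructor
  · rintro ⟨b, b', a, a', hd, hset, hx, hx'⟩
    exact ⟨a', a, b', b, T.diag_symm _ _ hd, Finset.swap_triangle_eq_iff.2 hset,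
      fun h => hx' (by simpa using congrArg Prod.swap h),
      fun h => hx (by simpa using congrArg Prod.swap h)⟩
  · rintro ⟨a', a, b', b, hd, hset, hx, hx'⟩
    exact ⟨b, b', a, a', T.diag_symm _ _ hd, Finset.swap_triangle_eq_iff.1 hset,
      fun h => hx' (by simp [h]), fun h => hx (by simp [h])⟩

variable [Fintype VG] [Fintype VH]

lemma alpha_left_of_not_diag {u v : VG × VH} (huv : ¬ T.diag u v) :
    T.alpha u v u = #{w | T.IsFace u v w ∧ ¬ T.diag u w} := by
  rw [alpha, if_pos (Or.inl rfl), if_neg huv]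
  congr 2
  ext w
  simp only [mem_filter, mem_univ, true_and, isFaceAvoiding_self_iff, huv, not_false_eq_true]

lemma alpha_right_of_not_diag {u v : VG × VH} (huv : ¬ T.diag u v) :
    T.alpha u v v = #{w | T.IsFace u v w ∧ ¬ T.diag v w} := by
  rw [alpha, if_pos (Or.inr rfl), if_neg huv]
  congr 2
  ext w
  have hvu : ¬ T.diag v u := fun h => huv (T.diag_symm _ _ h)
  simp only [mem_filter, mem_univ, true_and]
  rw [isFaceAvoiding_comm, isFaceAvoiding_self_iff, isFace_comm]
  tauto

/-- On a triangle `uvw` over a non-diagonal edge `uv`, the diagonal is `uw` or `vw`; `α(uv, u)`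
counts the triangles whose diagonal is `vw`. -/
lemma div_of_not_diag (φ : VG × VH → ℤ) {u v : VG × VH} (huv : ¬ T.diag u v) :
    T.Div φ u v = ∑ w ∈ univ.filter (fun w => T.IsFace u v w),
      (φ w - (if T.diag u w then 0 else φ u) - (if T.diag v w then 0 else φ v)) := by
  rw [Div, T.alpha_left_of_not_diag huv, T.alpha_right_of_not_diag huv]
  simp only [sum_sub_distrib, sum_ite, sum_const_zero, sum_const, filter_filter, nsmul_eq_mul,
    zero_add]
  ring

lemma div_vert (φ : VG × VH → ℤ) {a : VG} {b b' : VH} (hb : H.Adj b b') :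
    T.Div φ (a, b) (a, b') = ∑ a' ∈ univ.filter (fun a' => G.Adj a a'),
      if T.diag (a, b) (a', b') then φ (a', b') - φ (a, b') else φ (a', b) - φ (a, b) := by
  have hfaces : univ.filter (fun w => T.IsFace (a, b) (a, b') w) =
      (univ.filter (fun a' => G.Adj a a')).image
        (fun a' => if T.diag (a, b) (a', b') then (a', b') else (a', b)) := by
    ext w
    simp [T.isFace_vert_iff hb, eq_comm]
  have hinj : Set.InjOn (fun a' => if T.diag (a, b) (a', b') then (a', b') else (a', b))
      (univ.filter (fun a' => G.Adj a a')) := by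
    intro x _ y _ h
    simp only at h
    split_ifs at h <;> exact congrArg Prod.fst h
  rw [T.div_of_not_diag φ (T.not_diag_same_fst a b b'), hfaces, sum_image hinj]
  refine sum_congr rfl fun a' ha' => ?_
  by_cases hd : T.diag (a, b) (a', b')
  · simp [hd, T.not_diag_same_snd]
  · have := (T.diag_iff_not_diag (mem_filter.1 ha').2 hb).2 hd
    simp [hd, this, T.not_diag_same_snd]

lemma div_diag (φ : VG × VH → ℤ) {a a' : VG} {b b' : VH} (hd : T.diag (a, b) (a', b')) :
    T.Div φ (a, b) (a', b') = φ (a', b) + φ (a, b') - φ (a, b) - φ (a', b') := by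
  have hfaces : univ.filter (fun w => T.IsFace (a, b) (a', b') w) = {(a', b), (a, b')} := by
    ext w
    simp [T.isFace_diag_iff hd]
  have hne : (a', b) ≠ (a, b') := fun h => (T.diag_ne hd).1 (congrArg Prod.fst h).symm
  simp only [Div, alpha, hfaces, sum_pair hne, hd, true_or, or_true, if_true]
  ring

lemma swap_alpha (u v x : VH × VG) : T.swap.alpha u v x = T.alpha u.swap v.swap x.swap := by
  simp only [alpha, Prod.swap_inj, swap_diag]
  congr 3
  exact Finset.card_equiv (Equiv.prodComm _ _) (by simp [swap_isFaceAvoiding])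

lemma swap_div (φ : VG × VH → ℤ) (u v : VH × VG) :
    T.swap.Div (φ ∘ Prod.swap) u v = T.Div φ u.swap v.swap := by
  simp only [Div, swap_alpha, Function.comp_apply]
  congr 1
  exact Finset.sum_equiv (Equiv.prodComm _ _) (by simp [swap_isFace]) (by simp)

lemma swap_cartier {P : VG × VH → VG × VH → ℤ} (hP : T.Cartier P) :
    T.swap.Cartier (fun u v => P u.swap v.swap) := by
  intro x
  obtain ⟨φ, hφ⟩ := hP x.swap
  refine ⟨φ ∘ Prod.swap, fun u v huv hx => ?_⟩
  rw [swap_div]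
  exact hφ _ _ ((T.swap_adj u v).1 huv) (by simpa using hx)

lemma div_horiz (φ : VG × VH → ℤ) {a a' : VG} {b : VH} (ha : G.Adj a a') :
    T.Div φ (a, b) (a', b) = ∑ b' ∈ univ.filter (fun b' => H.Adj b b'),
      if T.diag (a, b) (a', b') then φ (a', b') - φ (a', b) else φ (a, b') - φ (a, b) := by
  simpa [swap_div] using T.swap.div_vert (φ ∘ Prod.swap) (a := b) ha

lemma div_vert_fst_add_snd (f : VG → ℤ) (g : VH → ℤ) {a : VG} {b b' : VH} (hb : H.Adj b b') :
    T.Div (fun w => f w.1 + g w.2) (a, b) (a, b') =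
      ∑ a' ∈ univ.filter (fun a' => G.Adj a a'), (f a' - f a) := by
  rw [T.div_vert _ hb]
  exact sum_congr rfl fun a' _ => by split_ifs <;> ring

lemma div_horiz_fst_add_snd (f : VG → ℤ) (g : VH → ℤ) {a a' : VG} {b : VH} (ha : G.Adj a a') :
    T.Div (fun w => f w.1 + g w.2) (a, b) (a', b) =
      ∑ b' ∈ univ.filter (fun b' => H.Adj b b'), (g b' - g b) := by
  rw [T.div_horiz _ ha]
  exact sum_congr rfl fun b' _ => by split_ifs <;> ring

lemma div_diag_fst_add_snd (f : VG → ℤ) (g : VH → ℤ) {a a' : VG} {b b' : VH}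
    (hd : T.diag (a, b) (a', b')) : T.Div (fun w => f w.1 + g w.2) (a, b) (a', b') = 0 := by
  rw [T.div_diag _ hd]
  ring

lemma div_vert_of_div_diag_eq_zero (φ : VG × VH → ℤ) {a : VG} {b b' : VH} (hb : H.Adj b b')
    (hφ : ∀ a', T.diag (a, b) (a', b') → T.Div φ (a, b) (a', b') = 0) :
    T.Div φ (a, b) (a, b') =
      ∑ a' ∈ univ.filter (fun a' => G.Adj a a'), (φ (a', b) - φ (a, b)) := by
  rw [T.div_vert _ hb]
  refine sum_congr rfl fun a' _ => ?_
  split_ifs with hd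
  · have := hφ a' hd
    rw [T.div_diag _ hd] at this
    linarith
  · rfl

lemma cartier_beta (hG : ∀ a, ∃ a', G.Adj a a') (hH : ∀ b, ∃ b', H.Adj b b')
    (C : VG → ℤ) (D : VH → ℤ) : T.Cartier (beta C D) := by
  rintro ⟨a, b⟩
  obtain ⟨a₁, ha⟩ := hG a
  obtain ⟨b₁, hb⟩ := hH b
  refine ⟨fun w => (Pi.single a₁ (C a) : VG → ℤ) w.1 + (Pi.single b₁ (D b) : VH → ℤ) w.2, ?_⟩
  rintro ⟨u, c⟩ ⟨v, c'⟩ (⟨hc, huv⟩ | ⟨hu, hcc'⟩ | hd) hx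
  · obtain rfl : c = c' := hc
    obtain rfl : b = c := by rcases hx with h | h <;> exact (Prod.ext_iff.1 h).2
    rw [beta, if_neg huv.ne, if_pos rfl, T.div_horiz_fst_add_snd _ _ huv,
      SimpleGraph.sum_adj_sub_pi_single hb]
  · obtain rfl : u = v := hu
    obtain rfl : a = u := by rcases hx with h | h <;> exact (Prod.ext_iff.1 h).1
    rw [beta, if_pos rfl, T.div_vert_fst_add_snd _ _ hcc', SimpleGraph.sum_adj_sub_pi_single ha]
  · rw [T.beta_eq_zero_of_diag C D hd, T.div_diag_fst_add_snd _ _ hd]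

variable {T}

lemma Cartier.of_adj_eq {P Q : VG × VH → VG × VH → ℤ} (hQ : T.Cartier Q)
    (h : ∀ u v, T.Adj u v → P u v = Q u v) : T.Cartier P := fun x =>
  let ⟨φ, hφ⟩ := hQ x
  ⟨φ, fun u v huv hx => (h u v huv).trans (hφ u v huv hx)⟩

lemma Cartier.vert_eq {P : VG × VH → VG × VH → ℤ} (hP : T.Cartier P)
    (h0 : ∀ u v, T.diag u v → P u v = 0) {a : VG} {b b' b'' : VH} (hb' : H.Adj b b')
    (hb'' : H.Adj b b'') : P (a, b) (a, b') = P (a, b) (a, b'') := by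
  obtain ⟨φ, hφ⟩ := hP (a, b)
  have hP_eq : ∀ c, H.Adj b c →
      P (a, b) (a, c) = ∑ a' ∈ univ.filter (fun a' => G.Adj a a'), (φ (a', b) - φ (a, b)) := by
    intro c hc
    rw [hφ (a, b) (a, c) (Or.inr (Or.inl ⟨rfl, hc⟩)) (Or.inl rfl)]
    refine T.div_vert_of_div_diag_eq_zero φ hc fun a' hd => ?_
    rw [← hφ _ _ (Or.inr (Or.inr hd)) (Or.inl rfl), h0 _ _ hd]
  rw [hP_eq b' hb', hP_eq b'' hb'']

lemma Cartier.vert_eq_of_preconnected {P : VG × VH → VG × VH → ℤ} (hP : T.Cartier P)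
    (h0 : ∀ u v, T.diag u v → P u v = 0) (hsymm : ∀ u v, P u v = P v u) (hH : H.Preconnected)
    (a : VG) {b b' c c' : VH} (hb : H.Adj b b') (hc : H.Adj c c') :
    P (a, b) (a, b') = P (a, c) (a, c') :=
  hH.eq_of_adj_of_adj (W := fun p q => P (a, p) (a, q)) (fun _ _ _ => hsymm _ _)
    (fun _ _ _ => hP.vert_eq h0) hb hc

lemma Cartier.horiz_eq_of_preconnected {P : VG × VH → VG × VH → ℤ} (hP : T.Cartier P)
    (h0 : ∀ u v, T.diag u v → P u v = 0) (hsymm : ∀ u v, P u v = P v u) (hG : G.Preconnected)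
    (b : VH) {a a' c c' : VG} (ha : G.Adj a a') (hc : G.Adj c c') :
    P (a, b) (a', b) = P (c, b) (c', b) :=
  (T.swap_cartier hP).vert_eq_of_preconnected (fun _ _ hd => h0 _ _ hd) (fun _ _ => hsymm _ _)
    hG b ha hc

end TriProd

/-- A divisor `P` on the triangulated product `Δ` lies in the image of
`β` if and only if `P` is Cartier and `P` vanishes on every diagonal edge of `Δ`. -/
theorem mem_image_beta_iff {VG VH : Type*} [Fintype VG] [Fintype VH]
    (G : SimpleGraph VG) (H : SimpleGraph VH)
    (hG : G.Connected) (hH : H.Connected)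
    (hGe : ∃ a a', G.Adj a a') (hHe : ∃ b b', H.Adj b b')
    (T : TriProd G H)
    (P : VG × VH → VG × VH → ℤ) (hsymm : ∀ u v, P u v = P v u) :
    (∃ (C : VG → ℤ) (D : VH → ℤ), ∀ u v, T.Adj u v → P u v = beta C D u v) ↔
      (T.Cartier P ∧ ∀ u v, T.diag u v → P u v = 0) := by
  obtain ⟨a₀, a₁, ha⟩ := hGe
  obtain ⟨b₀, b₁, hb⟩ := hHe
  constructor
  · rintro ⟨C, D, hP⟩
    have hβ := T.cartier_beta (hG.preconnected.exists_adj ha) (hH.preconnected.exists_adj hb) C D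
    refine ⟨hβ.of_adj_eq hP, fun u v hd => ?_⟩
    rw [hP u v (Or.inr (Or.inr hd)), T.beta_eq_zero_of_diag C D hd]
  · rintro ⟨hP, h0⟩
    refine ⟨fun a => P (a, b₀) (a, b₁), fun b => P (a₀, b) (a₁, b), ?_⟩
    rintro ⟨a, b⟩ ⟨a', b'⟩ (⟨rfl, haa'⟩ | ⟨rfl, hbb'⟩ | hd)
    · rw [beta, if_neg haa'.ne, if_pos rfl]
      exact hP.horiz_eq_of_preconnected h0 hsymm hG.preconnected b haa' ha
    · rw [beta, if_pos rfl]
      exact hP.vert_eq_of_preconnected h0 hsymm hH.preconnected a hbb' hb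
    · rw [h0 _ _ hd, T.beta_eq_zero_of_diag _ _ hd]
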